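/- Consider AMSGrad under the assumptions of the constant-step theorem but with general positive step sizes: losses ℓ_t : ℝ^d → ℝ convex differentiable with gradients g_t = ∇ℓ_t(w_t), |g_{t,i}| ≤ G and |w_{t,i} − w*_i| ≤ D for all t ≤ T and i ≤ d, first-moment parameters β_{1,t} = β_1/√t with β_1 ∈ (0,1), constant β_2 ∈ (0,1) with β_1² < β_2, updates m_{t,i} = β_{1,t} m_{t-1,i} + (1−β_{1,t}) g_{t,i} (m_0 = 0), v_{t,i} = (1−β_2) Σ_{s=1}^t β_2^{t−s} g_{s,i}², v̂_{t,i} = max_{s≤t} v_{s,i} > 0, w_{t+1,i} = w_{t,i} − γ_t m_{t,i}/√(v̂_{t,i}) with γ_t = α_t/(1 − ∏_{s=1}^t β_{1,s}) for positive α_t, and suppose √(v̂_{t,i})/α_t is non-decreasing in t for each i. Then Σ_{t=1}^T (ℓ_t(w_t) − ℓ_t(w*)) ≤ d D² G / (2 α_T (1−β_1)) + 2 d D G β_1 √T / (1−β_1) + Σ_{t=1}^T γ_t · d G C(β_1,β_2) / (2(1−β_1)), where C(β_1,β_2) = β_2/((1−β_2)(β_2 − β_1²)). -/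

import Mathlib

/-!
Per coordinate, solving the momentum recursion for `g_t` and expanding `(w_{t+1} - w*)²` splits
`g_t (w_t - w*)` into a telescoping term
`√v̂_t / (2 γ_t (1 - β_{1,t})) ((w_t - w*)² - (w_{t+1} - w*)²)`, a variance term
`γ_t m_t² / (2 (1 - β_{1,t}) √v̂_t)` and a bias term `-β_{1,t} / (1 - β_{1,t}) m_{t-1} (w_t - w*)`.
Since `√v̂_t / γ_t` is non-decreasing and `1 / (1 - β_{1,t})` non-increasing, Abel summation bounds
the telescoping sum by its last coefficient times `D²`. A weighted Young inequality gives
`m_t² ≤ C(β₁, β₂) v_t ≤ C v̂_t` by induction, which with `v̂_t ≤ G²` controls the variance term;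
`|m_{t-1}| ≤ G` and `∑ 1/√t ≤ 2√T` control the bias term. Convexity bounds the regret by
`∑_t ⟪g_t, w_t - w*⟫`.
-/

open Finset

theorem ConvexOn.apply_sub_le_sub_of_hasFDerivAt {E : Type*} [NormedAddCommGroup E]
    [NormedSpace ℝ E] {f : E → ℝ} {f' : E →L[ℝ] ℝ} {x : E} (hf : ConvexOn ℝ Set.univ f)
    (hd : HasFDerivAt f f' x) (y : E) : f' (y - x) ≤ f y - f x := by
  let L : ℝ →ᵃ[ℝ] E := AffineMap.lineMap x y
  have hφ : ConvexOn ℝ Set.univ (f ∘ L) := by simpa using hf.comp_affineMap L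
  have hφ' : HasDerivAt (f ∘ L) (f' (y - x)) 0 :=
    (by simpa [L] using hd : HasFDerivAt f f' (L 0)).comp_hasDerivAt 0 AffineMap.hasDerivAt_lineMap
  simpa [slope_def_field, L] using
    hφ.le_slope_of_hasDerivAt (Set.mem_univ 0) (Set.mem_univ 1) one_pos hφ'

theorem ConvexOn.sub_le_inner_of_hasGradientAt {F : Type*} [NormedAddCommGroup F]
    [InnerProductSpace ℝ F] [CompleteSpace F] {f : F → ℝ} {g x : F} (hf : ConvexOn ℝ Set.univ f)
    (hd : HasGradientAt f g x) (y : F) : f x - f y ≤ inner ℝ g (x - y) := by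
  have := hf.apply_sub_le_sub_of_hasFDerivAt hd.hasFDerivAt y
  rw [InnerProductSpace.toDual_apply_apply, ← neg_sub, inner_neg_right] at this
  linarith

theorem antitone_prod_Icc_one {f : ℕ → ℝ} (h0 : ∀ s, 1 ≤ s → 0 ≤ f s)
    (h1 : ∀ s, 1 ≤ s → f s ≤ 1) : Antitone fun t => ∏ s ∈ Icc 1 t, f s :=
  antitone_nat_of_succ_le fun t => by
    rw [prod_Icc_succ_top (Nat.le_add_left 1 t)]
    exact mul_le_of_le_one_right (prod_nonneg fun s hs => h0 s (mem_Icc.1 hs).1)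
      (h1 _ (Nat.le_add_left 1 t))

theorem sum_Icc_div_sqrt_le {c : ℝ} (hc : 0 ≤ c) (T : ℕ) :
    ∑ t ∈ Icc 1 T, c / Real.sqrt t ≤ 2 * c * Real.sqrt T := by
  induction T with
  | zero => simp
  | succ n ih =>
    rw [sum_Icc_succ_top (by omega)]
    have hpos : 0 < Real.sqrt (n + 1 : ℕ) := Real.sqrt_pos.2 (by positivity)
    have hsq : Real.sqrt (n + 1 : ℕ) ^ 2 = Real.sqrt n ^ 2 + 1 := by
      rw [Real.sq_sqrt (by positivity), Real.sq_sqrt (by positivity)]; push_cast; ring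
    -- `1 = (√(n+1) - √n)(√(n+1) + √n) ≤ 2√(n+1)(√(n+1) - √n)`
    have key : c / Real.sqrt (n + 1 : ℕ) ≤ 2 * c * Real.sqrt (n + 1 : ℕ) - 2 * c * Real.sqrt n := by
      rw [div_le_iff₀ hpos]
      nlinarith [mul_nonneg hc (sq_nonneg (Real.sqrt (n + 1 : ℕ) - Real.sqrt n))]
    linarith

section DivSqrt

variable {β : ℝ}

theorem div_sqrt_nat_le (hβ : 0 ≤ β) {t : ℕ} (ht : 1 ≤ t) : β / Real.sqrt t ≤ β :=
  div_le_self hβ (Real.one_le_sqrt.2 (by exact_mod_cast ht))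

theorem antitoneOn_div_sqrt_nat (hβ : 0 ≤ β) :
    AntitoneOn (fun t : ℕ => β / Real.sqrt t) (Set.Ici 1) := fun t ht _ _ htu =>
  div_le_div_of_nonneg_left hβ (Real.sqrt_pos.2 (by exact_mod_cast ht))
    (Real.sqrt_le_sqrt (by exact_mod_cast htu))

theorem antitone_prod_div_sqrt_nat (hβ0 : 0 ≤ β) (hβ1 : β ≤ 1) :
    Antitone fun t : ℕ => ∏ s ∈ Icc 1 t, β / Real.sqrt s :=
  antitone_prod_Icc_one (fun _ _ => by positivity) fun _ hs => (div_sqrt_nat_le hβ0 hs).trans hβ1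

end DivSqrt

noncomputable def emaSq (β : ℝ) (g : ℕ → ℝ) (t : ℕ) : ℝ :=
  (1 - β) * ∑ s ∈ Icc 1 t, β ^ (t - s) * g s ^ 2

namespace emaSq

variable {β : ℝ} {g : ℕ → ℝ}

@[simp]
theorem zero : emaSq β g 0 = 0 := by simp [emaSq]

theorem succ (t : ℕ) : emaSq β g (t + 1) = β * emaSq β g t + (1 - β) * g (t + 1) ^ 2 := by
  have hshift : ∑ s ∈ Icc 1 t, β ^ (t + 1 - s) * g s ^ 2 =
      β * ∑ s ∈ Icc 1 t, β ^ (t - s) * g s ^ 2 := by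
    rw [mul_sum]
    refine sum_congr rfl fun s hs => ?_
    rw [Nat.sub_add_comm (mem_Icc.1 hs).2, pow_succ]
    ring
  simp only [emaSq, sum_Icc_succ_top (Nat.le_add_left 1 t), hshift, Nat.sub_self, pow_zero]
  ring

theorem le_sq {G : ℝ} (hβ0 : 0 ≤ β) (hβ1 : β ≤ 1) {T : ℕ}
    (hg : ∀ t, 1 ≤ t → t ≤ T → |g t| ≤ G) : ∀ t ≤ T, emaSq β g t ≤ G ^ 2 := by
  intro t
  induction t with
  | zero => intro _; simpa using sq_nonneg G
  | succ t ih =>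
    intro ht
    have hg2 : g (t + 1) ^ 2 ≤ G ^ 2 := sq_le_sq' (abs_le.1 (hg _ (by omega) ht)).1
      (abs_le.1 (hg _ (by omega) ht)).2
    rw [succ]
    nlinarith [ih (by omega)]

end emaSq

theorem abs_le_of_convex_comb_rec {T : ℕ} {G : ℝ} {b g m : ℕ → ℝ} (hG : 0 ≤ G) (hm0 : m 0 = 0)
    (hb : ∀ t, 1 ≤ t → t ≤ T → 0 ≤ b t ∧ b t ≤ 1)
    (hm : ∀ t, 1 ≤ t → t ≤ T → m t = b t * m (t - 1) + (1 - b t) * g t)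
    (hg : ∀ t, 1 ≤ t → t ≤ T → |g t| ≤ G) : ∀ t ≤ T, |m t| ≤ G := by
  intro t
  induction t with
  | zero => intro _; simpa [hm0] using hG
  | succ t ih =>
    intro ht
    obtain ⟨hb0, hb1⟩ := hb (t + 1) (by omega) ht
    rw [hm (t + 1) (by omega) ht, Nat.add_sub_cancel]
    calc |b (t + 1) * m t + (1 - b (t + 1)) * g (t + 1)|
        ≤ b (t + 1) * |m t| + (1 - b (t + 1)) * |g (t + 1)| := by
          refine (abs_add_le _ _).trans_eq ?_
          rw [abs_mul, abs_mul, abs_of_nonneg hb0, abs_of_nonneg (sub_nonneg.2 hb1)]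
      _ ≤ b (t + 1) * G + (1 - b (t + 1)) * G := by
          have := sub_nonneg.2 hb1
          gcongr
          · exact ih (by omega)
          · exact hg _ (by omega) ht
      _ = G := by ring

theorem sq_convex_comb_le {β₁ β₂ b x y : ℝ} (hβ₁ : 0 < β₁) (hβ₁₂ : β₁ ^ 2 < β₂)
    (hb0 : 0 ≤ b) (hb : b ≤ β₁) (hb1 : b ≤ 1) :
    (β₂ - β₁ ^ 2) * (b * x + (1 - b) * y) ^ 2 ≤ β₂ * ((β₂ - β₁ ^ 2) * x ^ 2 + y ^ 2) := by
  set K := β₂ - β₁ ^ 2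
  have hK : 0 < K := sub_pos.2 hβ₁₂
  -- Young's inequality `2pq ≤ εp² + q²/ε` with `ε = K / β₁²`
  have young : β₁ ^ 2 * K * (b * x + (1 - b) * y) ^ 2 ≤
      β₂ * K * (b * x) ^ 2 + β₁ ^ 2 * β₂ * ((1 - b) * y) ^ 2 := by
    nlinarith [sq_nonneg (K * (b * x) - β₁ ^ 2 * ((1 - b) * y))]
  have hbx : (b * x) ^ 2 ≤ β₁ ^ 2 * x ^ 2 := by
    rw [mul_pow]; gcongr
  have hby : ((1 - b) * y) ^ 2 ≤ y ^ 2 := by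
    rw [mul_pow]; exact mul_le_of_le_one_left (sq_nonneg y) (pow_le_one₀ (by linarith) (by linarith))
  have hβ₂ : 0 < β₂ := (sq_nonneg β₁).trans_lt hβ₁₂
  refine le_of_mul_le_mul_left ?_ (pow_pos hβ₁ 2)
  nlinarith [mul_le_mul_of_nonneg_left hbx (mul_pos hβ₂ hK).le,
    mul_le_mul_of_nonneg_left hby (mul_pos (pow_pos hβ₁ 2) hβ₂).le]

theorem sq_momentum_le_emaSq {T : ℕ} {β₁ β₂ : ℝ} {b g m : ℕ → ℝ} (hβ₁ : 0 < β₁)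
    (hβ₁₂ : β₁ ^ 2 < β₂) (hβ₂ : β₂ < 1) (hm0 : m 0 = 0)
    (hb : ∀ t, 1 ≤ t → t ≤ T → 0 ≤ b t ∧ b t ≤ β₁)
    (hm : ∀ t, 1 ≤ t → t ≤ T → m t = b t * m (t - 1) + (1 - b t) * g t) :
    ∀ t ≤ T, (1 - β₂) * (β₂ - β₁ ^ 2) * m t ^ 2 ≤ β₂ * emaSq β₂ g t := by
  intro t
  induction t with
  | zero => intro _; simp [hm0]
  | succ t ih =>
    intro ht
    have hβ₁1 : β₁ < 1 := by nlinarith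
    obtain ⟨hb0, hbβ⟩ := hb (t + 1) (by omega) ht
    have hstep := sq_convex_comb_le (x := m t) (y := g (t + 1)) hβ₁ hβ₁₂ hb0 hbβ
      (hbβ.trans hβ₁1.le)
    rw [hm (t + 1) (by omega) ht, Nat.add_sub_cancel, emaSq.succ]
    nlinarith [ih (by omega), mul_le_mul_of_nonneg_left hstep (sub_nonneg.2 hβ₂.le)]

theorem le_sq_of_isGreatest_emaSq {T : ℕ} {β G : ℝ} {g v vhat : ℕ → ℝ} (hβ0 : 0 ≤ β)
    (hβ1 : β ≤ 1) (hv : ∀ t, 1 ≤ t → t ≤ T → v t = emaSq β g t)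
    (hvhat : ∀ t, 1 ≤ t → t ≤ T → IsGreatest {x : ℝ | ∃ s, 1 ≤ s ∧ s ≤ t ∧ x = v s} (vhat t))
    (hG : ∀ t, 1 ≤ t → t ≤ T → |g t| ≤ G) : ∀ t, 1 ≤ t → t ≤ T → vhat t ≤ G ^ 2 := by
  intro t h1 h2
  obtain ⟨s, hs1, hst, hs⟩ := (hvhat t h1 h2).1
  rw [hs, hv s hs1 (hst.trans h2)]
  exact emaSq.le_sq hβ0 hβ1 hG s (hst.trans h2)

theorem sq_momentum_le_of_isGreatest_emaSq {T : ℕ} {β₁ β₂ : ℝ} {b g m v vhat : ℕ → ℝ}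
    (hβ₁ : 0 < β₁) (hβ₁₂ : β₁ ^ 2 < β₂) (hβ₂ : β₂ < 1) (hm0 : m 0 = 0)
    (hb : ∀ t, 1 ≤ t → t ≤ T → 0 ≤ b t ∧ b t ≤ β₁)
    (hm : ∀ t, 1 ≤ t → t ≤ T → m t = b t * m (t - 1) + (1 - b t) * g t)
    (hv : ∀ t, 1 ≤ t → t ≤ T → v t = emaSq β₂ g t)
    (hvhat : ∀ t, 1 ≤ t → t ≤ T → IsGreatest {x : ℝ | ∃ s, 1 ≤ s ∧ s ≤ t ∧ x = v s} (vhat t)) :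
    ∀ t, 1 ≤ t → t ≤ T → m t ^ 2 ≤ β₂ / ((1 - β₂) * (β₂ - β₁ ^ 2)) * vhat t := by
  intro t h1 h2
  have hmom := sq_momentum_le_emaSq hβ₁ hβ₁₂ hβ₂ hm0 hb hm t h2
  have hvv : v t ≤ vhat t := (hvhat t h1 h2).2 ⟨t, h1, le_rfl, rfl⟩
  rw [div_mul_eq_mul_div, le_div_iff₀ (mul_pos (by linarith) (by linarith))]
  nlinarith [hv t h1 h2]

theorem mul_sub_eq_of_momentum_step {b γ s g m m' w w' wstar : ℝ} (hb : b ≠ 1) (hγ : γ ≠ 0)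
    (hs : s ≠ 0) (hm : m = b * m' + (1 - b) * g) (hw : w' = w - γ * m / s) :
    g * (w - wstar) =
      s / γ * (1 / (2 * (1 - b))) * ((w - wstar) ^ 2 - (w' - wstar) ^ 2) +
        γ * m ^ 2 / (2 * (1 - b) * s) - b / (1 - b) * (m' * (w - wstar)) := by
  have hb' : 1 - b ≠ 0 := sub_ne_zero.2 (Ne.symm hb)
  have hg : g = (m - b * m') / (1 - b) := by
    rw [eq_div_iff hb', hm]; ring
  subst hw hg
  field_simp
  ring

theorem mul_sub_le_of_momentum_step {β₁ C G D b γ s g m m' w w' wstar : ℝ} (hβ₁ : β₁ < 1)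
    (hb0 : 0 ≤ b) (hb : b ≤ β₁) (hγ : 0 < γ) (hs : 0 < s) (hsG : s ≤ G)
    (hmC : m ^ 2 ≤ C * s ^ 2) (hm'G : |m'| ≤ G) (hwD : |w - wstar| ≤ D)
    (hm : m = b * m' + (1 - b) * g) (hw : w' = w - γ * m / s) :
    g * (w - wstar) ≤
      s / γ * (1 / (2 * (1 - b))) * ((w - wstar) ^ 2 - (w' - wstar) ^ 2) +
        γ * (C * G / (2 * (1 - β₁))) + b * (G * D / (1 - β₁)) := by
  have h1b : 1 - β₁ ≤ 1 - b := by linarith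
  have h1β : 0 < 1 - β₁ := by linarith
  have h1b' : 0 < 1 - b := by linarith
  have hG : 0 ≤ G := (abs_nonneg _).trans hm'G
  have hC : 0 ≤ C := nonneg_of_mul_nonneg_left ((sq_nonneg m).trans hmC) (pow_pos hs 2)
  rw [mul_sub_eq_of_momentum_step (by linarith) hγ.ne' hs.ne' hm hw]
  have hvar : γ * m ^ 2 / (2 * (1 - b) * s) ≤ γ * (C * G / (2 * (1 - β₁))) := by
    calc γ * m ^ 2 / (2 * (1 - b) * s) ≤ γ * (C * s ^ 2) / (2 * (1 - b) * s) := by gcongr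
      _ = γ * (C * s / (2 * (1 - b))) := by field_simp
      _ ≤ γ * (C * G / (2 * (1 - β₁))) := by gcongr
  have hbias : -(b / (1 - b) * (m' * (w - wstar))) ≤ b * (G * D / (1 - β₁)) := by
    have hmw : -(m' * (w - wstar)) ≤ G * D := by
      refine (neg_le_abs _).trans ?_
      rw [abs_mul]
      exact mul_le_mul hm'G hwD (abs_nonneg _) ((abs_nonneg _).trans hm'G)
    have hD : 0 ≤ D := (abs_nonneg _).trans hwD
    calc -(b / (1 - b) * (m' * (w - wstar))) = b / (1 - b) * -(m' * (w - wstar)) := by ring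
      _ ≤ b / (1 - b) * (G * D) := by gcongr
      _ ≤ b / (1 - β₁) * (G * D) := by gcongr
      _ = b * (G * D / (1 - β₁)) := by ring
  linarith

theorem sum_Icc_mul_mul_sub_succ_le {T : ℕ} (hT : 1 ≤ T) {u c a : ℕ → ℝ} {c₀ A : ℝ}
    (hu : MonotoneOn u (Set.Icc 1 T)) (hu0 : ∀ t, 1 ≤ t → t ≤ T → 0 ≤ u t)
    (hc : AntitoneOn c (Set.Icc 1 T)) (hc0 : ∀ t, 1 ≤ t → t ≤ T → 0 ≤ c t ∧ c t ≤ c₀)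
    (ha0 : ∀ t, 0 ≤ a t) (haA : ∀ t, 1 ≤ t → t ≤ T → a t ≤ A) :
    ∑ t ∈ Icc 1 T, u t * c t * (a t - a (t + 1)) ≤ c₀ * u T * A := by
  -- the boundary term `u T * c T * a (T + 1)` is kept to make the induction go through
  suffices h : ∑ t ∈ Icc 1 T, u t * c t * (a t - a (t + 1)) ≤
      c₀ * u T * A - u T * c T * a (T + 1) by
    have := mul_nonneg (mul_nonneg (hu0 T hT le_rfl) (hc0 T hT le_rfl).1) (ha0 (T + 1))
    linarith
  induction T, hT using Nat.le_induction with
  | base =>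
    obtain ⟨hc1, hc1₀⟩ := hc0 1 le_rfl le_rfl
    rw [Icc_self, sum_singleton]
    nlinarith [mul_le_mul hc1₀ (haA 1 le_rfl le_rfl) (ha0 1) (hc1.trans hc1₀), hu0 1 le_rfl le_rfl]
  | succ T hT ih =>
    have hsub : Set.Icc 1 T ⊆ Set.Icc 1 (T + 1) := Set.Icc_subset_Icc_right T.le_succ
    have ih := ih (hu.mono hsub) (fun t h1 _ => hu0 t h1 (by omega)) (hc.mono hsub)
      (fun t h1 _ => hc0 t h1 (by omega)) (fun t h1 _ => haA t h1 (by omega))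
    have hT' : T ∈ Set.Icc 1 (T + 1) := ⟨hT, T.le_succ⟩
    have hT1 : T + 1 ∈ Set.Icc 1 (T + 1) := ⟨by omega, le_rfl⟩
    have hu_step := hu hT' hT1 T.le_succ
    have hc_step := hc hT' hT1 T.le_succ
    obtain ⟨hc0', hcc₀⟩ := hc0 (T + 1) (by omega) le_rfl
    have hprod : u (T + 1) * c (T + 1) - u T * c T ≤ (u (T + 1) - u T) * c (T + 1) := by
      nlinarith [mul_le_mul_of_nonneg_left hc_step (hu0 T hT (by omega))]
    have hgain : a (T + 1) * ((u (T + 1) - u T) * c (T + 1)) ≤ A * ((u (T + 1) - u T) * c₀) :=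
      mul_le_mul (haA (T + 1) (by omega) le_rfl)
        (mul_le_mul_of_nonneg_left hcc₀ (sub_nonneg.2 hu_step))
        (mul_nonneg (sub_nonneg.2 hu_step) hc0') ((ha0 _).trans (haA (T + 1) (by omega) le_rfl))
    rw [sum_Icc_succ_top (by omega)]
    nlinarith [mul_le_mul_of_nonneg_left hprod (ha0 (T + 1)), hgain]

theorem sum_mul_sub_le_of_momentum_steps {T : ℕ} (hT : 1 ≤ T) {β₁ C G D wstar : ℝ}
    {b γ s g m w : ℕ → ℝ} (hβ₁ : β₁ < 1)
    (hb : ∀ t, 1 ≤ t → t ≤ T → 0 ≤ b t ∧ b t ≤ β₁) (hb_anti : AntitoneOn b (Set.Icc 1 T))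
    (hγ : ∀ t, 1 ≤ t → t ≤ T → 0 < γ t) (hs : ∀ t, 1 ≤ t → t ≤ T → 0 < s t ∧ s t ≤ G)
    (hsγ : MonotoneOn (fun t => s t / γ t) (Set.Icc 1 T))
    (hmC : ∀ t, 1 ≤ t → t ≤ T → m t ^ 2 ≤ C * s t ^ 2) (hmG : ∀ t, t ≤ T → |m t| ≤ G)
    (hm : ∀ t, 1 ≤ t → t ≤ T → m t = b t * m (t - 1) + (1 - b t) * g t)
    (hw : ∀ t, 1 ≤ t → t ≤ T → w (t + 1) = w t - γ t * m t / s t)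
    (hD : ∀ t, 1 ≤ t → t ≤ T → |w t - wstar| ≤ D) :
    ∑ t ∈ Icc 1 T, g t * (w t - wstar) ≤
      1 / (2 * (1 - β₁)) * (s T / γ T) * D ^ 2 +
        (∑ t ∈ Icc 1 T, γ t) * (C * G / (2 * (1 - β₁))) +
        (∑ t ∈ Icc 1 T, b t) * (G * D / (1 - β₁)) := by
  have hstep : ∀ t ∈ Icc 1 T, g t * (w t - wstar) ≤
      s t / γ t * (1 / (2 * (1 - b t))) * ((w t - wstar) ^ 2 - (w (t + 1) - wstar) ^ 2) +
        γ t * (C * G / (2 * (1 - β₁))) + b t * (G * D / (1 - β₁)) := by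
    intro t ht
    obtain ⟨h1, h2⟩ := mem_Icc.1 ht
    exact mul_sub_le_of_momentum_step hβ₁ (hb t h1 h2).1 (hb t h1 h2).2 (hγ t h1 h2)
      (hs t h1 h2).1 (hs t h1 h2).2 (hmC t h1 h2) (hmG (t - 1) (by omega)) (hD t h1 h2)
      (hm t h1 h2) (hw t h1 h2)
  have htelescope : ∑ t ∈ Icc 1 T,
      s t / γ t * (1 / (2 * (1 - b t))) * ((w t - wstar) ^ 2 - (w (t + 1) - wstar) ^ 2) ≤
        1 / (2 * (1 - β₁)) * (s T / γ T) * D ^ 2 := by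
    refine sum_Icc_mul_mul_sub_succ_le hT hsγ
      (fun t h1 h2 => div_nonneg (hs t h1 h2).1.le (hγ t h1 h2).le) ?_ ?_
      (fun t => sq_nonneg _) ?_
    · intro t ht u hu htu
      have := hb_anti ht hu htu
      have := (hb t ht.1 ht.2).2
      exact one_div_le_one_div_of_le (by linarith) (by linarith)
    · intro t h1 h2
      have := hb t h1 h2
      exact ⟨one_div_nonneg.2 (by linarith), one_div_le_one_div_of_le (by linarith) (by linarith)⟩
    · intro t h1 h2
      exact sq_le_sq' (abs_le.1 (hD t h1 h2)).1 (abs_le.1 (hD t h1 h2)).2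
  calc ∑ t ∈ Icc 1 T, g t * (w t - wstar)
      ≤ ∑ t ∈ Icc 1 T, (s t / γ t * (1 / (2 * (1 - b t))) *
            ((w t - wstar) ^ 2 - (w (t + 1) - wstar) ^ 2) +
          γ t * (C * G / (2 * (1 - β₁))) + b t * (G * D / (1 - β₁))) := sum_le_sum hstep
    _ = ∑ t ∈ Icc 1 T,
            s t / γ t * (1 / (2 * (1 - b t))) * ((w t - wstar) ^ 2 - (w (t + 1) - wstar) ^ 2) +
          (∑ t ∈ Icc 1 T, γ t) * (C * G / (2 * (1 - β₁))) +
          (∑ t ∈ Icc 1 T, b t) * (G * D / (1 - β₁)) := by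
      rw [sum_add_distrib, sum_add_distrib, sum_mul, sum_mul]
    _ ≤ _ := by linarith

theorem amsgrad_coord_regret_le {T : ℕ} (hT : 1 ≤ T) {β1 β2 G D wstar : ℝ}
    {α g m v vhat w : ℕ → ℝ} (hβ1 : 0 < β1) (hβ12 : β1 ^ 2 < β2) (hβ2 : β2 < 1)
    (hα : ∀ t, 1 ≤ t → t ≤ T → 0 < α t) (hm0 : m 0 = 0)
    (hm : ∀ t, 1 ≤ t → t ≤ T →
      m t = (β1 / Real.sqrt t) * m (t - 1) + (1 - β1 / Real.sqrt t) * g t)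
    (hv : ∀ t, 1 ≤ t → t ≤ T → v t = emaSq β2 g t)
    (hvhat : ∀ t, 1 ≤ t → t ≤ T → IsGreatest {x : ℝ | ∃ s, 1 ≤ s ∧ s ≤ t ∧ x = v s} (vhat t))
    (hvpos : ∀ t, 1 ≤ t → t ≤ T → 0 < vhat t)
    (hupd : ∀ t, 1 ≤ t → t ≤ T →
      w (t + 1) = w t - (α t / (1 - ∏ s ∈ Icc 1 t, (β1 / Real.sqrt s))) * m t / Real.sqrt (vhat t))
    (hD : ∀ t, 1 ≤ t → t ≤ T → |w t - wstar| ≤ D) (hG : ∀ t, 1 ≤ t → t ≤ T → |g t| ≤ G)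
    (hvmono : MonotoneOn (fun t => Real.sqrt (vhat t) / α t) (Set.Icc 1 T)) :
    ∑ t ∈ Icc 1 T, g t * (w t - wstar) ≤
      D ^ 2 * G / (2 * α T * (1 - β1)) + 2 * D * G * β1 * Real.sqrt T / (1 - β1) +
        (∑ t ∈ Icc 1 T, α t / (1 - ∏ s ∈ Icc 1 t, (β1 / Real.sqrt s))) *
          (β2 / ((1 - β2) * (β2 - β1 ^ 2)) * G / (2 * (1 - β1))) := by
  set b : ℕ → ℝ := fun t => β1 / Real.sqrt t
  set P : ℕ → ℝ := fun t => ∏ s ∈ Icc 1 t, b s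
  have hβ1' : β1 < 1 := by nlinarith
  have hG0 : 0 ≤ G := (abs_nonneg _).trans (hG 1 le_rfl hT)
  have hD0 : 0 ≤ D := (abs_nonneg _).trans (hD 1 le_rfl hT)
  have hb : ∀ t, 1 ≤ t → 0 ≤ b t ∧ b t ≤ β1 := fun t ht =>
    ⟨by positivity, div_sqrt_nat_le hβ1.le ht⟩
  have hP_anti : Antitone P := antitone_prod_div_sqrt_nat hβ1.le hβ1'.le
  have hP : ∀ t, 1 ≤ t → 0 ≤ P t ∧ P t ≤ β1 := fun t ht =>
    ⟨prod_nonneg fun s _ => by positivity, (hP_anti ht).trans (by simp [P, b])⟩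
  have hγ : ∀ t, 1 ≤ t → t ≤ T → 0 < α t / (1 - P t) := fun t h1 h2 =>
    div_pos (hα t h1 h2) (by linarith [hP t h1])
  have hvhat_le := le_sq_of_isGreatest_emaSq (by nlinarith) hβ2.le hv hvhat hG
  have hs : ∀ t, 1 ≤ t → t ≤ T → 0 < Real.sqrt (vhat t) ∧ Real.sqrt (vhat t) ≤ G :=
    fun t h1 h2 => ⟨Real.sqrt_pos.2 (hvpos t h1 h2), (Real.sqrt_le_left hG0).2 (hvhat_le t h1 h2)⟩
  have hsγ : MonotoneOn (fun t => Real.sqrt (vhat t) / (α t / (1 - P t))) (Set.Icc 1 T) := by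
    refine (hvmono.mul (fun t _ u _ htu => sub_le_sub_left (hP_anti htu) 1) ?_ ?_).congr ?_
    · exact fun t ht => div_nonneg (Real.sqrt_nonneg _) (hα t ht.1 ht.2).le
    · exact fun t ht => by linarith [hP t ht.1]
    · intro t ht
      simp only [Pi.mul_apply]
      rw [div_div_eq_mul_div, mul_div_right_comm]
  have hmC : ∀ t, 1 ≤ t → t ≤ T →
      m t ^ 2 ≤ β2 / ((1 - β2) * (β2 - β1 ^ 2)) * Real.sqrt (vhat t) ^ 2 := fun t h1 h2 => by
    rw [Real.sq_sqrt (hvpos t h1 h2).le]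
    exact sq_momentum_le_of_isGreatest_emaSq hβ1 hβ12 hβ2 hm0 (fun t h1 _ => hb t h1) hm hv hvhat
      t h1 h2
  have hmG : ∀ t, t ≤ T → |m t| ≤ G :=
    abs_le_of_convex_comb_rec hG0 hm0 (fun t h1 _ => ⟨(hb t h1).1, (hb t h1).2.trans hβ1'.le⟩) hm hG
  have key := sum_mul_sub_le_of_momentum_steps hT hβ1' (fun t h1 _ => hb t h1)
    ((antitoneOn_div_sqrt_nat hβ1.le).mono fun t ht => ht.1) hγ hs hsγ hmC hmG hm hupd hD
  have hlast : 1 / (2 * (1 - β1)) * (Real.sqrt (vhat T) / (α T / (1 - P T))) * D ^ 2 ≤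
      D ^ 2 * G / (2 * α T * (1 - β1)) := by
    have hαT := hα T hT le_rfl
    have hnum : Real.sqrt (vhat T) * (1 - P T) ≤ G :=
      (mul_le_of_le_one_right (Real.sqrt_nonneg _) (by linarith [hP T hT])).trans
        (hs T hT le_rfl).2
    calc 1 / (2 * (1 - β1)) * (Real.sqrt (vhat T) / (α T / (1 - P T))) * D ^ 2
        = D ^ 2 * (Real.sqrt (vhat T) * (1 - P T)) / (2 * α T * (1 - β1)) := by
          field_simp
      _ ≤ D ^ 2 * G / (2 * α T * (1 - β1)) := by gcongr
  have hbias : (∑ t ∈ Icc 1 T, b t) * (G * D / (1 - β1)) ≤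
      2 * D * G * β1 * Real.sqrt T / (1 - β1) :=
    (mul_le_mul_of_nonneg_right (sum_Icc_div_sqrt_le hβ1.le T)
      (div_nonneg (mul_nonneg hG0 hD0) (sub_nonneg.2 hβ1'.le))).trans_eq (by ring)
  linarith

/-- General (variable step size) AMSGrad regret bound from the appendix proof:
with bias-corrected step sizes `γ_t = α_t / (1 − ∏_{s=1}^t β_{1,s})`,
`β_{1,t} = β₁/√t`, and `√(v̂_{t,i})/α_t` non-decreasing in `t`,
`Σ_{t=1}^T (ℓ_t(w_t) − ℓ_t(w*)) ≤ dD²G/(2α_T(1−β₁)) + 2dDGβ₁√T/(1−β₁)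
  + Σ_{t=1}^T γ_t · dG C(β₁,β₂)/(2(1−β₁))`. -/
theorem stmt17 {d : ℕ} (T : ℕ) (hT : 1 ≤ T)
    (ℓ : ℕ → EuclideanSpace ℝ (Fin d) → ℝ)
    (w g m : ℕ → EuclideanSpace ℝ (Fin d))
    (v vhat : ℕ → Fin d → ℝ)
    (wstar : EuclideanSpace ℝ (Fin d))
    (β1 β2 D G : ℝ) (α : ℕ → ℝ)
    (hβ1 : β1 ∈ Set.Ioo (0 : ℝ) 1) (hβ2 : β2 ∈ Set.Ioo (0 : ℝ) 1)
    (hβ12 : β1 ^ 2 < β2) (hα : ∀ t, 1 ≤ t → t ≤ T → 0 < α t)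
    (hconv : ∀ t, 1 ≤ t → t ≤ T → ConvexOn ℝ Set.univ (ℓ t))
    (hgrad : ∀ t, 1 ≤ t → t ≤ T → HasGradientAt (ℓ t) (g t) (w t))
    (hm0 : m 0 = 0)
    (hm : ∀ t, 1 ≤ t → t ≤ T → ∀ i,
      m t i = (β1 / Real.sqrt t) * m (t - 1) i + (1 - β1 / Real.sqrt t) * g t i)
    (hv : ∀ t, 1 ≤ t → t ≤ T → ∀ i,
      v t i = (1 - β2) * ∑ s ∈ Finset.Icc 1 t, β2 ^ (t - s) * g s i ^ 2)
    (hvhat : ∀ t, 1 ≤ t → t ≤ T → ∀ i,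
      IsGreatest {x : ℝ | ∃ s, 1 ≤ s ∧ s ≤ t ∧ x = v s i} (vhat t i))
    (hvpos : ∀ t, 1 ≤ t → t ≤ T → ∀ i, 0 < vhat t i)
    (hupd : ∀ t, 1 ≤ t → t ≤ T → ∀ i,
      w (t + 1) i = w t i -
        (α t / (1 - ∏ s ∈ Finset.Icc 1 t, (β1 / Real.sqrt s))) * m t i /
          Real.sqrt (vhat t i))
    (hD : ∀ t, 1 ≤ t → t ≤ T → ∀ i, |w t i - wstar i| ≤ D)
    (hG : ∀ t, 1 ≤ t → t ≤ T → ∀ i, |g t i| ≤ G)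
    (hvmono : ∀ i, ∀ s t, 1 ≤ s → s ≤ t → t ≤ T →
      Real.sqrt (vhat s i) / α s ≤ Real.sqrt (vhat t i) / α t) :
    ∑ t ∈ Finset.Icc 1 T, (ℓ t (w t) - ℓ t wstar) ≤
      d * D ^ 2 * G / (2 * α T * (1 - β1)) +
      2 * d * D * G * β1 * Real.sqrt T / (1 - β1) +
      (∑ t ∈ Finset.Icc 1 T,
          α t / (1 - ∏ s ∈ Finset.Icc 1 t, (β1 / Real.sqrt s))) *
        (d * G * (β2 / ((1 - β2) * (β2 - β1 ^ 2))) / (2 * (1 - β1))) := by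
  have hcoord (i : Fin d) := amsgrad_coord_regret_le hT hβ1.1 hβ12 hβ2.2 hα
    (by rw [hm0]; rfl) (fun t h1 h2 => hm t h1 h2 i) (fun t h1 h2 => hv t h1 h2 i)
    (fun t h1 h2 => hvhat t h1 h2 i) (fun t h1 h2 => hvpos t h1 h2 i)
    (fun t h1 h2 => hupd t h1 h2 i) (fun t h1 h2 => hD t h1 h2 i) (fun t h1 h2 => hG t h1 h2 i)
    (fun s hs t ht hst => hvmono i s t hs.1 hst ht.2)
  calc ∑ t ∈ Icc 1 T, (ℓ t (w t) - ℓ t wstar)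
      ≤ ∑ t ∈ Icc 1 T, ∑ i, g t i * (w t i - wstar i) := by
        refine sum_le_sum fun t ht => ?_
        obtain ⟨h1, h2⟩ := mem_Icc.1 ht
        simpa [PiLp.inner_apply, mul_comm] using
          (hconv t h1 h2).sub_le_inner_of_hasGradientAt (hgrad t h1 h2) wstar
    _ = ∑ i, ∑ t ∈ Icc 1 T, g t i * (w t i - wstar i) := sum_comm
    _ ≤ ∑ _i : Fin d, (D ^ 2 * G / (2 * α T * (1 - β1)) +
          2 * D * G * β1 * Real.sqrt T / (1 - β1) +
          (∑ t ∈ Icc 1 T, α t / (1 - ∏ s ∈ Icc 1 t, (β1 / Real.sqrt s))) *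
            (β2 / ((1 - β2) * (β2 - β1 ^ 2)) * G / (2 * (1 - β1)))) :=
        sum_le_sum fun i _ => hcoord i
    _ = _ := by
      rw [sum_const, card_univ, Fintype.card_fin, nsmul_eq_mul]
      ring
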